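/- Let x*, y*, p*, q* > 0 be real numbers and let (a,b), (c,d) ∈ ℝ² be unit vectors (a² + b² = 1, c² + d² = 1) with s := a·d − b·c ≠ 0. Define the 4×4 real matrices A_correct = −diag(x*, x*, p*, p*) − M_c, where M_c has rows [(y*−x*)a², (y*−x*)ab, p*d², −p*cd], [(y*−x*)ab, (y*−x*)b², −p*cd, p*c²], [x*b², −x*ab, (q*−p*)c², (q*−p*)cd], [−x*ab, x*a², (q*−p*)cd, (q*−p*)d²], and A_flipped = −diag(x*, x*, p*, p*) − M_f, where M_f has rows [(y*−x*)c², (y*−x*)cd, p*b², −p*ab], [(y*−x*)cd, (y*−x*)d², −p*ab, p*a²], [x*d², −x*cd, (q*−p*)a², (q*−p*)ab], [−x*cd, x*c², (q*−p*)ab, (q*−p*)b²]. Then A_correct and A_flipped have the same characteristic polynomial, namely (λ + q*)(λ + y*)(λ² + (p* + x*)λ + p*·x*·s²), all their eigenvalues are real and negative, and hence both matrices are Hurwitz. -/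

import Mathlib

/-!
In the orthonormal frame `(g₁₂*, g₁₂*⊥)` of the first pair of coordinates and `(g₁₃*, g₁₃*⊥)` of
the second, the Jacobian becomes block triangular: the coordinates along `g₁₂*` and `g₁₃*` contribute the
eigenvalues `-y*` and `-q*`, and the perpendicular coordinates form a `2 × 2` block whose
characteristic polynomial is `λ² + (p* + x*)λ + p*x*(1 - cos² θ*) = λ² + (p* + x*)λ + p*x*s²`.
This depends on the two bearings only through `s²`, which is unchanged when they are swapped,
as happens in the flipped formation. The quadratic factor has positive coefficients and
discriminant `(p* - x*)² + 4p*x*(1 - s²) ≥ 0`, so its roots are real and negative.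
-/

open Polynomial

theorem Matrix.charpoly_conj_of_mul_self_eq_one {n R : Type*} [CommRing R] [Fintype n]
    [DecidableEq n] {Q : Matrix n n R} (hQ : Q * Q = 1) (A : Matrix n n R) :
    (Q * A * Q).charpoly = A.charpoly := by
  rw [charpoly_mul_comm, ← Matrix.mul_assoc, hQ, Matrix.one_mul]

theorem Complex.im_eq_zero_and_re_neg_of_sq_add_mul_add_eq_zero {β γ : ℝ} (hβ : 0 < β)
    (hγ : 0 < γ) (hdisc : 4 * γ ≤ β ^ 2) {μ : ℂ} (h : μ ^ 2 + β * μ + γ = 0) :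
    μ.im = 0 ∧ μ.re < 0 := by
  have hre := congrArg re h
  have him := congrArg im h
  simp only [sq, add_re, mul_re, ofReal_re, ofReal_im, zero_re, add_im, mul_im, zero_im]
    at hre him
  have hv : μ.im = 0 := by
    by_contra hv
    have hu : 2 * μ.re + β = 0 := by
      apply mul_left_cancel₀ hv
      linear_combination him
    nlinarith [sq_pos_of_ne_zero hv]
  refine ⟨hv, ?_⟩
  rw [hv] at hre
  nlinarith

theorem im_eq_zero_and_re_neg_of_isRoot_map {q y β γ : ℝ} (hq : 0 < q) (hy : 0 < y)
    (hβ : 0 < β) (hγ : 0 < γ) (hdisc : 4 * γ ≤ β ^ 2) {μ : ℂ}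
    (h : (((X + C q) * (X + C y) * (X ^ 2 + C β * X + C γ)).map (algebraMap ℝ ℂ)).IsRoot μ) :
    μ.im = 0 ∧ μ.re < 0 := by
  simp only [IsRoot.def, Polynomial.map_mul, Polynomial.map_add, Polynomial.map_pow,
    Polynomial.map_X, Polynomial.map_C, eval_mul, eval_add, eval_pow, eval_X, eval_C,
    Complex.coe_algebraMap, mul_eq_zero] at h
  rcases h with (hμ | hμ) | hμ
  · rw [eq_neg_of_add_eq_zero_left hμ]
    simpa using hq
  · rw [eq_neg_of_add_eq_zero_left hμ]
    simpa using hy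
  · exact Complex.im_eq_zero_and_re_neg_of_sq_add_mul_add_eq_zero hβ hγ hdisc
      (by linear_combination hμ)

theorem charpoly_neg_blockTriangular {R : Type*} [CommRing R] (x y p q s k : R)
    (h : s ^ 2 + k ^ 2 = 1) :
    (-!![y, 0, 0, p * s; 0, x, 0, p * k; 0, -(x * s), q, 0; 0, x * k, 0, p]).charpoly =
      (X + C q) * (X + C y) * (X ^ 2 + C (p + x) * X + C (p * x * s ^ 2)) := by
  have hC : C s ^ 2 + C k ^ 2 = (1 : R[X]) := by
    rw [← map_pow, ← map_pow, ← map_add, h, map_one]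
  rw [Matrix.charpoly, Matrix.det_succ_column_zero, Fin.sum_univ_four]
  simp only [Matrix.det_fin_three, Matrix.submatrix_apply, Matrix.charmatrix_apply,
    Matrix.neg_apply, Matrix.of_apply, Matrix.cons_val, Matrix.diagonal_apply, Fin.succAbove,
    Fin.reduceSucc, Fin.reduceEq, Fin.reduceLT, Fin.reduceCastSucc, Fin.val_zero, ↓reduceIte,
    map_neg, map_mul, map_add, map_pow, map_zero]
  linear_combination -(C p * C x * (X + C q) * (X + C y)) * hC

section LinkJacobian

variable {R : Type*} [CommRing R]

def linkJacobian (x y p q a b c d : R) : Matrix (Fin 4) (Fin 4) R :=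
  -(Matrix.diagonal ![x, x, p, p]) -
    !![(y - x) * a ^ 2, (y - x) * (a * b), p * d ^ 2, -(p * (c * d));
       (y - x) * (a * b), (y - x) * b ^ 2, -(p * (c * d)), p * c ^ 2;
       x * b ^ 2, -(x * (a * b)), (q - p) * c ^ 2, (q - p) * (c * d);
       -(x * (a * b)), x * a ^ 2, (q - p) * (c * d), (q - p) * d ^ 2]

def bearingFrame (a b c d : R) : Matrix (Fin 4) (Fin 4) R :=
  !![a, b, 0, 0; b, -a, 0, 0; 0, 0, c, d; 0, 0, d, -c]

variable {a b c d : R}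

theorem cross_sq_add_dot_sq_eq_one (hab : a ^ 2 + b ^ 2 = 1) (hcd : c ^ 2 + d ^ 2 = 1) :
    (a * d - b * c) ^ 2 + (a * c + b * d) ^ 2 = 1 := by
  linear_combination (c ^ 2 + d ^ 2) * hab + hcd

theorem bearingFrame_mul_self (hab : a ^ 2 + b ^ 2 = 1) (hcd : c ^ 2 + d ^ 2 = 1) :
    bearingFrame a b c d * bearingFrame a b c d = 1 := by
  ext i j
  fin_cases i <;> fin_cases j <;>
    simp only [bearingFrame, Matrix.mul_apply, Fin.sum_univ_four, Matrix.of_apply, Matrix.cons_val,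
      Fin.zero_eta, Fin.mk_one, Fin.reduceFinMk, Matrix.cons_val_zero, Matrix.cons_val_one,
      Matrix.one_apply] <;> grind

theorem bearingFrame_conj_linkJacobian (x y p q : R) (hab : a ^ 2 + b ^ 2 = 1)
    (hcd : c ^ 2 + d ^ 2 = 1) :
    bearingFrame a b c d * linkJacobian x y p q a b c d * bearingFrame a b c d =
      -!![y, 0, 0, p * (a * d - b * c); 0, x, 0, p * (a * c + b * d);
          0, -(x * (a * d - b * c)), q, 0; 0, x * (a * c + b * d), 0, p] := by
  ext i j
  fin_cases i <;> fin_cases j <;>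
    simp only [bearingFrame, linkJacobian, Matrix.mul_apply, Fin.sum_univ_four, Matrix.of_apply,
      Matrix.cons_val, Matrix.sub_apply, Matrix.neg_apply, Matrix.diagonal_apply, Fin.zero_eta,
      Fin.mk_one, Fin.reduceFinMk, Matrix.cons_val_zero, Matrix.cons_val_one] <;> grind

theorem linkJacobian_charpoly (x y p q : R) (hab : a ^ 2 + b ^ 2 = 1)
    (hcd : c ^ 2 + d ^ 2 = 1) :
    (linkJacobian x y p q a b c d).charpoly =
      (X + C q) * (X + C y) * (X ^ 2 + C (p + x) * X + C (p * x * (a * d - b * c) ^ 2)) := by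
  rw [← Matrix.charpoly_conj_of_mul_self_eq_one (bearingFrame_mul_self hab hcd),
    bearingFrame_conj_linkJacobian x y p q hab hcd]
  exact charpoly_neg_blockTriangular x y p q _ _ (cross_sq_add_dot_sq_eq_one hab hcd)

end LinkJacobian

/-- the Jacobians of the (1B2D) link dynamics at the correct and
at the flipped equilibrium have the same characteristic polynomial, namely
`(λ + q*)(λ + y*)(λ² + (p* + x*)λ + p*x*s²)`, all eigenvalues are real and
negative, and hence both matrices are Hurwitz. -/
theorem stmt_15 (x y p q a b c d : ℝ)
    (hx : 0 < x) (hy : 0 < y) (hp : 0 < p) (hq : 0 < q)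
    (hab : a ^ 2 + b ^ 2 = 1) (hcd : c ^ 2 + d ^ 2 = 1)
    (s : ℝ) (hs : s = a * d - b * c) (hs0 : s ≠ 0)
    (Acor Aflip : Matrix (Fin 4) (Fin 4) ℝ)
    (hAcor : Acor = -(Matrix.diagonal ![x, x, p, p]) -
      !![(y - x) * a ^ 2, (y - x) * (a * b), p * d ^ 2, -(p * (c * d));
         (y - x) * (a * b), (y - x) * b ^ 2, -(p * (c * d)), p * c ^ 2;
         x * b ^ 2, -(x * (a * b)), (q - p) * c ^ 2, (q - p) * (c * d);
         -(x * (a * b)), x * a ^ 2, (q - p) * (c * d), (q - p) * d ^ 2])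
    (hAflip : Aflip = -(Matrix.diagonal ![x, x, p, p]) -
      !![(y - x) * c ^ 2, (y - x) * (c * d), p * b ^ 2, -(p * (a * b));
         (y - x) * (c * d), (y - x) * d ^ 2, -(p * (a * b)), p * a ^ 2;
         x * d ^ 2, -(x * (c * d)), (q - p) * a ^ 2, (q - p) * (a * b);
         -(x * (c * d)), x * c ^ 2, (q - p) * (a * b), (q - p) * b ^ 2]) :
    Acor.charpoly = Aflip.charpoly ∧
    Acor.charpoly = (X + C q) * (X + C y) * (X ^ 2 + C (p + x) * X + C (p * x * s ^ 2)) ∧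
    (∀ μ : ℂ, ((Acor.map (algebraMap ℝ ℂ)).charpoly).IsRoot μ → μ.im = 0 ∧ μ.re < 0) ∧
    (∀ μ : ℂ, ((Aflip.map (algebraMap ℝ ℂ)).charpoly).IsRoot μ → μ.im = 0 ∧ μ.re < 0) := by
  have hcor :
      Acor.charpoly = (X + C q) * (X + C y) * (X ^ 2 + C (p + x) * X + C (p * x * s ^ 2)) := by
    rw [hAcor, hs]
    exact linkJacobian_charpoly x y p q hab hcd
  have hflip : Aflip.charpoly = Acor.charpoly := by
    rw [hcor, hAflip, hs, show (a * d - b * c) ^ 2 = (c * b - d * a) ^ 2 by ring]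
    exact linkJacobian_charpoly x y p q hcd hab
  have hs2 : s ^ 2 ≤ 1 := by
    rw [hs]
    linarith [cross_sq_add_dot_sq_eq_one hab hcd, sq_nonneg (a * c + b * d)]
  have hγ : 0 < p * x * s ^ 2 := by positivity
  have hdisc : 4 * (p * x * s ^ 2) ≤ (p + x) ^ 2 := by
    nlinarith [sq_nonneg (p - x), mul_nonneg (mul_pos hp hx).le (sub_nonneg.2 hs2)]
  have hroots (A : Matrix (Fin 4) (Fin 4) ℝ) (hA : A.charpoly = Acor.charpoly) (μ : ℂ)
      (hμ : ((A.map (algebraMap ℝ ℂ)).charpoly).IsRoot μ) : μ.im = 0 ∧ μ.re < 0 := by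
    rw [Matrix.charpoly_map, hA, hcor] at hμ
    exact im_eq_zero_and_re_neg_of_isRoot_map hq hy (by positivity) hγ hdisc hμ
  exact ⟨hflip.symm, hcor, hroots Acor rfl, hroots Aflip hflip⟩
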